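/- arXiv:2306.06839 — 2 statements merged into one kernel-verified Lean document; each statement's English description precedes it below -/
import Mathlib

section
/- A Laplacian matrix L (zero row sums, nonnegative off-diagonal entries) satisfies λ_max((L + Lᵀ)/2) = 0 if and only if all column sums of L are zero. -/
/-!
On the all-ones vector the quadratic form of `S = (L + Lᵀ)/2` is `𝟙ᵀ L 𝟙 = 0`, and
`S 𝟙 = ½ Lᵀ 𝟙` is half the vector of column sums. If `λ_max(S) = 0`, then `-S` is positive
semidefinite, so the null vector `𝟙` of its quadratic form lies in its kernel. Conversely, zero
column sums make `S` a symmetric matrix with zero row sums and nonnegative off-diagonal entries,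
whose quadratic form `-½ ∑ S i j (x i - x j)²` is nonpositive, while `S 𝟙 = 0` makes `0` an
eigenvalue.
-/

open Matrix BigOperators
open scoped ComplexOrder

namespace Matrix

section Hermitian

variable {n 𝕜 : Type*} [Fintype n] [DecidableEq n] [RCLike 𝕜] {A : Matrix n n 𝕜}

lemma IsHermitian.posSemidef_neg_iff_eigenvalues_nonpos (hA : A.IsHermitian) :
    (-A).PosSemidef ↔ hA.eigenvalues ≤ 0 := by
  conv_lhs => rw [hA.spectral_theorem, ← map_neg, diagonal_neg]
  simp [Unitary.isUnit_coe.posSemidef_star_right_conjugate_iff, Pi.le_def]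

lemma IsHermitian.iSup_eigenvalues_le_zero_iff [Nonempty n] (hA : A.IsHermitian) :
    (⨆ i, hA.eigenvalues i) ≤ 0 ↔ (-A).PosSemidef := by
  rw [ciSup_le_iff (Set.finite_range _).bddAbove, hA.posSemidef_neg_iff_eigenvalues_nonpos,
    Pi.le_def]
  rfl

lemma IsHermitian.exists_eigenvalues_eq_zero {v : n → 𝕜} (hA : A.IsHermitian) (hv : v ≠ 0)
    (hAv : A *ᵥ v = 0) : ∃ i, hA.eigenvalues i = 0 := by
  have hdet : A.det = 0 := exists_mulVec_eq_zero_iff.mp ⟨v, hv, hAv⟩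
  simpa [hA.det_eq_prod_eigenvalues, Finset.prod_eq_zero_iff] using hdet

lemma IsHermitian.iSup_eigenvalues_eq_zero_iff {v : n → 𝕜} (hA : A.IsHermitian) (hv : v ≠ 0)
    (hvAv : star v ⬝ᵥ A *ᵥ v = 0) :
    (⨆ i, hA.eigenvalues i) = 0 ↔ (-A).PosSemidef ∧ A *ᵥ v = 0 := by
  obtain ⟨i₀, -⟩ := Function.ne_iff.mp hv
  have : Nonempty n := ⟨i₀⟩
  rw [← hA.iSup_eigenvalues_le_zero_iff]
  constructor
  · intro hsup
    have hneg : (-A).PosSemidef := hA.iSup_eigenvalues_le_zero_iff.mp hsup.le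
    have hker : -A *ᵥ v = 0 :=
      (hneg.dotProduct_mulVec_zero_iff v).mp (by simp [neg_mulVec, hvAv])
    exact ⟨hsup.le, by simpa [neg_mulVec] using hker⟩
  · rintro ⟨hle, hAv⟩
    obtain ⟨i, hi⟩ := hA.exists_eigenvalues_eq_zero hv hAv
    exact hle.antisymm (hi ▸ le_ciSup (Set.finite_range _).bddAbove i)

end Hermitian

section Laplacian

variable {n R : Type*} [Fintype n]

lemma two_mul_dotProduct_mulVec_eq_neg_sum_mul_sub_sq [CommRing R] {M : Matrix n n R}
    (hrow : ∀ i, ∑ j, M i j = 0) (hcol : ∀ j, ∑ i, M i j = 0) (x : n → R) :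
    2 * (x ⬝ᵥ M *ᵥ x) = -∑ i, ∑ j, M i j * (x i - x j) ^ 2 := by
  have hrow' : ∑ i, ∑ j, M i j * x i ^ 2 = 0 := by
    simp [← Finset.sum_mul, hrow]
  have hcol' : ∑ i, ∑ j, M i j * x j ^ 2 = 0 := by
    rw [Finset.sum_comm]
    simp [← Finset.sum_mul, hcol]
  have hexpand (i j : n) : M i j * (x i - x j) ^ 2
      = M i j * x i ^ 2 + M i j * x j ^ 2 - 2 * (x i * (M i j * x j)) := by ring
  simp only [hexpand, Finset.sum_sub_distrib, Finset.sum_add_distrib, hrow', hcol',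
    ← Finset.mul_sum, dotProduct, mulVec]
  ring

lemma dotProduct_mulVec_self_nonpos [CommRing R] [LinearOrder R] [IsStrictOrderedRing R]
    {M : Matrix n n R} (hoff : ∀ i j, i ≠ j → 0 ≤ M i j) (hrow : ∀ i, ∑ j, M i j = 0)
    (hcol : ∀ j, ∑ i, M i j = 0) (x : n → R) : x ⬝ᵥ M *ᵥ x ≤ 0 := by
  have hsum : 0 ≤ ∑ i, ∑ j, M i j * (x i - x j) ^ 2 := by
    refine Finset.sum_nonneg fun i _ => Finset.sum_nonneg fun j _ => ?_
    rcases eq_or_ne i j with rfl | hij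
    · simp
    · exact mul_nonneg (hoff i j hij) (sq_nonneg _)
  have := two_mul_dotProduct_mulVec_eq_neg_sum_mul_sub_sq hrow hcol x
  linarith

lemma IsHermitian.posSemidef_neg_of_sum_row_eq_zero {M : Matrix n n ℝ} (hM : M.IsHermitian)
    (hoff : ∀ i j, i ≠ j → 0 ≤ M i j) (hrow : ∀ i, ∑ j, M i j = 0) : (-M).PosSemidef := by
  have hcol (j : n) : ∑ i, M i j = 0 := by simpa [← hM.apply j] using hrow j
  refine .of_dotProduct_mulVec_nonneg hM.neg fun x => ?_
  simpa [neg_mulVec] using dotProduct_mulVec_self_nonpos hoff hrow hcol x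

end Laplacian

end Matrix

theorem reactivity_zero_iff_column_sums_zero_general {n : ℕ}
    (L : Matrix (Fin n) (Fin n) ℝ)
    (hoff : ∀ i j, i ≠ j → 0 ≤ L i j)
    (hrow : ∀ i, ∑ j, L i j = 0)
    (hS : ((1 / 2 : ℝ) • (L + Lᵀ)).IsHermitian) :
    (⨆ i, hS.eigenvalues i) = 0 ↔ ∀ j, ∑ i, L i j = 0 := by
  -- for `n = 0` both sides hold, the empty supremum in `ℝ` being `0`
  rcases isEmpty_or_nonempty (Fin n) with _ | _
  · simp
  set S := (1 / 2 : ℝ) • (L + Lᵀ)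
  have hSrow (i : Fin n) : ∑ j, S i j = (∑ j, L j i) / 2 := by
    simp [S, Finset.sum_add_distrib, ← Finset.mul_sum, hrow]
    ring
  have hSone : S *ᵥ 1 = fun i => (∑ j, L j i) / 2 := by
    ext i
    simp [mulVec, dotProduct, hSrow]
  have hform : star 1 ⬝ᵥ S *ᵥ 1 = 0 := by
    simp [hSone, dotProduct, ← Finset.sum_div, Finset.sum_comm (f := fun i j => L j i), hrow]
  have hSoff (i j : Fin n) (hij : i ≠ j) : 0 ≤ S i j := by
    have := hoff i j hij
    have := hoff j i hij.symm
    simp only [S, Matrix.smul_apply, Matrix.add_apply, transpose_apply, smul_eq_mul]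
    positivity
  rw [hS.iSup_eigenvalues_eq_zero_iff one_ne_zero hform, hSone]
  simp only [funext_iff, Pi.zero_apply, div_eq_zero_iff, two_ne_zero, or_false]
  exact ⟨And.right, fun hcol =>
    ⟨hS.posSemidef_neg_of_sum_row_eq_zero hSoff fun i => by simp [hSrow, hcol], hcol⟩⟩

/-- A Laplacian matrix `L` (zero row sums, nonnegative off-diagonal entries, nonpositive
diagonal) satisfies `λ_max((L + Lᵀ)/2) = 0` iff all column sums of `L` are zero. -/
theorem reactivity_zero_iff_column_sums_zero {n : ℕ} (hn : 0 < n)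
    (L : Matrix (Fin n) (Fin n) ℝ)
    (hdiag : ∀ i, L i i ≤ 0)
    (hoff : ∀ i j, i ≠ j → 0 ≤ L i j)
    (hrow : ∀ i, ∑ j, L i j = 0)
    (hS : ((1 / 2 : ℝ) • (L + Lᵀ)).IsHermitian) :
    (⨆ i, hS.eigenvalues i) = 0 ↔ ∀ j, ∑ i, L i j = 0 :=
  reactivity_zero_iff_column_sums_zero_general L hoff hrow hS
end

section
/- A weighted digraph with Laplacian L can be reweighted (keeping exactly the same support with strictly positive weights on all existing edges) so that the new Laplacian L* has zero row and column sums if and only if the underlying directed graph is strongly connected, assuming it contains a directed spanning tree. -/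
/-! If a nonnegative weighting is balanced, the set of vertices reachable from `b` sends out no
weight, so by balance it receives none either: the tail of every edge into `b` is reachable from
`b`. Thus every edge can be reversed by a path, reachability is symmetric, and the root of the
spanning tree connects any two vertices.

Conversely, in a strongly connected graph every edge lies on a cycle, the indicator of a cycle is
balanced, and the sum of one such cycle per edge is a balanced weighting positive on every edge. -/

theorem Relation.ReflTransGen.symm_of_forall_rel {α : Type*} {r : α → α → Prop}
    (h : ∀ a b, r a b → ReflTransGen r b a) {a b : α} (hab : ReflTransGen r a b) :
    ReflTransGen r b a := by
  induction hab with
  | refl => exact .refl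
  | tail _ hcd ih => exact (h _ _ hcd).trans ih

namespace Digraph.Weighted

open Finset Relation

variable {V R : Type*}

section Balance

variable [Fintype V] [AddCommGroup R]

def netOutflow : (V → V → R) →+ (V → R) where
  toFun w v := ∑ u, w v u - ∑ u, w u v
  map_zero' := by ext; simp
  map_add' F G := by ext; simp only [Pi.add_apply, sum_add_distrib]; abel

@[simp]
lemma netOutflow_apply (w : V → V → R) (v : V) :
    netOutflow w v = ∑ u, w v u - ∑ u, w u v := rfl

lemma netOutflow_eq_zero_iff {w : V → V → R} :
    netOutflow w = 0 ↔ ∀ v, ∑ u, w u v = ∑ u, w v u := by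
  simp only [funext_iff, netOutflow_apply, Pi.zero_apply, sub_eq_zero]
  exact forall_congr' fun v => eq_comm

lemma sum_inflow_compl_eq_sum_outflow_compl [DecidableEq V] {w : V → V → R}
    (hbal : ∀ v, ∑ u, w u v = ∑ u, w v u) (S : Finset V) :
    ∑ v ∈ S, ∑ u ∈ Sᶜ, w u v = ∑ v ∈ S, ∑ u ∈ Sᶜ, w v u := by
  have htotal : ∑ v ∈ S, ∑ u, w u v = ∑ v ∈ S, ∑ u, w v u := sum_congr rfl fun v _ => hbal v
  simp only [← sum_add_sum_compl S, sum_add_distrib] at htotal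
  rw [sum_comm (s := S) (t := S)] at htotal
  exact add_left_cancel htotal

lemma reflTransGen_of_pos_of_balanced [PartialOrder R] [IsOrderedAddMonoid R]
    {w : V → V → R} (hw : 0 ≤ w) (hbal : ∀ v, ∑ u, w u v = ∑ u, w v u) {a b : V}
    (hab : 0 < w a b) : ReflTransGen (fun x y => w x y ≠ 0) b a := by
  classical
  set S := univ.filter (ReflTransGen (fun x y => w x y ≠ 0) b)
  have hout : ∀ v ∈ S, ∀ u ∈ Sᶜ, w v u = 0 := by
    intro v hv u hu
    by_contra h
    simp only [S, mem_compl, mem_filter, mem_univ, true_and] at hv hu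
    exact hu (hv.tail h)
  have hin : ∑ v ∈ S, ∑ u ∈ Sᶜ, w u v = 0 := by
    rw [sum_inflow_compl_eq_sum_outflow_compl hbal S]
    exact sum_eq_zero fun v hv => sum_eq_zero fun u hu => hout v hv u hu
  have hb : b ∈ S := by simp [S, ReflTransGen.refl]
  by_contra ha
  have ha' : a ∈ Sᶜ := by simpa [S] using ha
  have hinb := (sum_eq_zero_iff_of_nonneg fun v _ => sum_nonneg fun u _ => hw u v).1 hin b hb
  exact hab.ne' ((sum_eq_zero_iff_of_nonneg fun u _ => hw u b).1 hinb a ha')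

end Balance

section Construction

variable [DecidableEq V]

def edgeIndicator [Zero R] [One R] (a b : V) : V → V → R :=
  fun i j => if i = a ∧ j = b then 1 else 0

lemma edgeIndicator_nonneg [Zero R] [One R] [PartialOrder R] [ZeroLEOneClass R] (a b : V) :
    0 ≤ (edgeIndicator a b : V → V → R) := by
  intro i j
  unfold edgeIndicator
  split_ifs
  exacts [zero_le_one, le_rfl]

lemma edgeIndicator_eq_zero_of_not [Zero R] [One R] {E : V → V → Prop} {a b i j : V}
    (hab : E a b) (hij : ¬ E i j) : (edgeIndicator a b i j : R) = 0 := by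
  unfold edgeIndicator
  rw [if_neg]
  rintro ⟨rfl, rfl⟩
  exact hij hab

lemma netOutflow_edgeIndicator [Fintype V] [Ring R] (a b : V) :
    netOutflow (edgeIndicator a b : V → V → R) = Pi.single a 1 - Pi.single b 1 := by
  ext v
  by_cases hva : v = a <;> by_cases hvb : v = b <;>
    simp [edgeIndicator, ite_and, Pi.single_apply, hva, hvb]

variable [Fintype V] [Ring R] [PartialOrder R] [IsOrderedRing R] {E : V → V → Prop}

lemma exists_flow_of_reflTransGen {x y : V} (h : ReflTransGen E x y) :
    ∃ F : V → V → R, 0 ≤ F ∧ (∀ i j, ¬ E i j → F i j = 0) ∧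
      netOutflow F = Pi.single x 1 - Pi.single y 1 := by
  induction h with
  | refl => exact ⟨0, le_rfl, fun _ _ _ => rfl, by simp⟩
  | @tail b c _ hbc ih =>
    obtain ⟨F, hF0, hFE, hFout⟩ := ih
    refine ⟨F + edgeIndicator b c, add_nonneg hF0 (edgeIndicator_nonneg b c),
      fun i j hij => ?_, ?_⟩
    · rw [Pi.add_apply, Pi.add_apply, hFE i j hij, edgeIndicator_eq_zero_of_not hbc hij, add_zero]
    · rw [map_add, hFout, netOutflow_edgeIndicator, sub_add_sub_cancel]

end Construction

variable [Fintype V] [Ring R] [PartialOrder R] [IsOrderedRing R] {E : V → V → Prop}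

lemma exists_circulation_through_edge {a b : V} (hab : E a b) (hba : ReflTransGen E b a) :
    ∃ C : V → V → R, 0 ≤ C ∧ (∀ i j, ¬ E i j → C i j = 0) ∧ netOutflow C = 0 ∧ 1 ≤ C a b := by
  classical
  obtain ⟨F, hF0, hFE, hFout⟩ := exists_flow_of_reflTransGen (R := R) hba
  refine ⟨F + edgeIndicator a b, add_nonneg hF0 (edgeIndicator_nonneg a b),
    fun i j hij => ?_, ?_, ?_⟩
  · rw [Pi.add_apply, Pi.add_apply, hFE i j hij, edgeIndicator_eq_zero_of_not hab hij, add_zero]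
  · rw [map_add, hFout, netOutflow_edgeIndicator, sub_add_sub_cancel, sub_self]
  · simpa [edgeIndicator] using hF0 a b

lemma exists_pos_circulation_of_forall_reflTransGen [Nontrivial R]
    (h : ∀ i j, ReflTransGen E i j) :
    ∃ w : V → V → R, (∀ i j, E i j → 0 < w i j) ∧ (∀ i j, ¬ E i j → w i j = 0) ∧
      netOutflow w = 0 := by
  have hcycle : ∀ p : V × V, ∃ C : V → V → R, 0 ≤ C ∧ (∀ i j, ¬ E i j → C i j = 0) ∧
      netOutflow C = 0 ∧ (E p.1 p.2 → 1 ≤ C p.1 p.2) := by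
    rintro ⟨a, b⟩
    by_cases hab : E a b
    · obtain ⟨C, hC0, hCE, hCout, hC1⟩ := exists_circulation_through_edge (R := R) hab (h b a)
      exact ⟨C, hC0, hCE, hCout, fun _ => hC1⟩
    · exact ⟨0, le_rfl, fun _ _ _ => rfl, map_zero _, fun h => absurd h hab⟩
  choose C hC0 hCE hCout hC1 using hcycle
  refine ⟨∑ p, C p, fun i j hij => ?_, fun i j hij => ?_, by simp [map_sum, hCout]⟩
  · calc (0 : R) < 1 := zero_lt_one
      _ ≤ C (i, j) i j := hC1 (i, j) hij
      _ ≤ ∑ p, C p i j := single_le_sum (fun p _ => hC0 p i j) (mem_univ (i, j))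
      _ = (∑ p, C p) i j := by simp only [Finset.sum_apply]
  · simp only [Finset.sum_apply, hCE _ i j hij, sum_const_zero]

end Digraph.Weighted

open Digraph.Weighted in
/-- A weighted digraph containing a directed spanning tree can be reweighted (strictly
positive weights exactly on its edges) so that the resulting Laplacian has zero row and
column sums (i.e., the graph is balanced, hence minimally reactive) iff the underlying
directed graph is strongly connected. -/
theorem reweighting_balanced_iff_strongly_connected
    {V : Type*} [Fintype V] (E : V → V → Prop)
    (htree : ∃ r : V, ∀ v, Relation.ReflTransGen E r v) :
    (∃ w : V → V → ℝ,
        (∀ i j, E i j → 0 < w i j) ∧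
        (∀ i j, ¬ E i j → w i j = 0) ∧
        (∀ v, ∑ u, w u v = ∑ u, w v u)) ↔
      (∀ i j, Relation.ReflTransGen E i j) := by
  constructor
  · rintro ⟨w, hpos, hzero, hbal⟩ i j
    obtain ⟨r, hr⟩ := htree
    have hw : 0 ≤ w := fun a b => by
      by_cases hab : E a b
      exacts [(hpos a b hab).le, (hzero a b hab).ge]
    have hback : ∀ a b, E a b → Relation.ReflTransGen E b a := fun a b hab =>
      Relation.ReflTransGen.mono (fun x y hxy => not_not.1 fun hE => hxy (hzero x y hE)) _ _
        (reflTransGen_of_pos_of_balanced hw hbal (hpos a b hab))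
    exact ((hr i).symm_of_forall_rel hback).trans (hr j)
  · intro h
    obtain ⟨w, hpos, hzero, hbal⟩ := exists_pos_circulation_of_forall_reflTransGen (R := ℝ) h
    exact ⟨w, hpos, hzero, netOutflow_eq_zero_iff.1 hbal⟩
end
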